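/- Let A be an I(ℂ)-diamond DFA with n states over a tree-like communication architecture (ℂ, T). Then the asynchronous automaton B constructed in the paper — where each process's local state is a pair (s,t) ∈ S × S, with transition on letter a computing s_a = TDiam(T_a) from the states of processes in ℂ(a), moving all participants' second components to Δ(s_a, a) and updating first components except at the root of T_a — recognizes exactly L(A). In particular every process of B has at most n² states. -/

import Mathlib

/-!
The local state of a process `p` after a word `w` consists of the states of `A` after the part of
`w` that `p` knows about (its causal past) and after the part known to both `p` and its parent in
the tree. By the diamond property independent letters commute, so a run of `A` on the letters at a
causally closed set of positions `Z` may be split at any causally closed `U ⊆ Z`: first the letters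
at `U`, then those at `Z \ U`.

If `q` hangs below a set `L` of processes, the views of `L` and of `q` meet exactly in the view
shared by `q` and its parent: causal chains can only cross the edge between `q` and its parent
through events of both. The letters seen only by `q` live in the subtree of `q` and those seen only
by `L` avoid it, so the two remainders commute, and the state after the joint view is determined by
the state after the view of `L` and the local state of `q`. Adding the processes of a connected set
from its top downwards, the state after their joint view is determined by their local states.
For the participants of a letter this makes the transitions well defined; for all processes it
gives back the state of `A` after the whole word, hence the accepting condition.
-/

/-- A deterministic finite automaton with a partial transition function. -/
structure PDFA (A S : Type) where
  step : S → A → Option S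
  s0 : S
  F : Set S

def PDFA.stepw {A S : Type} (M : PDFA A S) : S → List A → Option S
  | s, [] => some s
  | s, a :: u => (M.step s a).bind fun t => M.stepw t u

def IDiamond {A S : Type} (M : PDFA A S) (I : A → A → Prop) : Prop :=
  ∀ a b, I a b → ∀ s, M.stepw s [a, b] = M.stepw s [b, a]

def PDFA.Accepts {A S : Type} (M : PDFA A S) (w : List A) : Prop :=
  ∃ s ∈ M.F, M.stepw M.s0 w = some s

/-- An asynchronous (Zielonka) automaton over distributed alphabet `(A, dom)`
with processes `P` and local state sets `St p`. -/
structure AAut (P A : Type) (dom : A → Set P) (St : P → Type) where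
  init : ∀ p, St p
  trans : ∀ a : A, ((p : {x // x ∈ dom a}) → St p.1) →
    Option ((p : {x // x ∈ dom a}) → St p.1)
  Acc : Set (∀ p, St p)

open Classical in
/-- One global step of an asynchronous automaton: only processes in `dom a`
read and change their states. -/
noncomputable def AAut.stepG {P A : Type} {dom : A → Set P} {St : P → Type}
    (B : AAut P A dom St) (a : A) (g : ∀ p, St p) : Option (∀ p, St p) :=
  (B.trans a (fun p => g p.1)).map fun upd p =>
    if h : p ∈ dom a then upd ⟨p, h⟩ else g p

noncomputable def AAut.runw {P A : Type} {dom : A → Set P} {St : P → Type}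
    (B : AAut P A dom St) : (∀ p, St p) → List A → Option (∀ p, St p)
  | g, [] => some g
  | g, a :: u => (B.stepG a g).bind fun g' => B.runw g' u

def AAut.Accepts {P A : Type} {dom : A → Set P} {St : P → Type}
    (B : AAut P A dom St) (w : List A) : Prop :=
  ∃ g ∈ B.Acc, B.runw B.init w = some g

/-- The communication architecture `dom` is tree-like w.r.t. the tree `T`. -/
def TreeLike {P A : Type} (dom : A → Set P) (T : SimpleGraph P) : Prop :=
  T.IsTree ∧ (∀ a, (SimpleGraph.induce (dom a) T).Connected) ∧
    (∀ p q, T.Adj p q → ∃ a, p ∈ dom a ∧ q ∈ dom a)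

theorem PDFA.stepw_append {A S : Type} (M : PDFA A S) (s : S) (u v : List A) :
    M.stepw s (u ++ v) = (M.stepw s u).bind fun t => M.stepw t v := by
  induction u generalizing s with
  | nil => simp [PDFA.stepw]
  | cons a u ih => simp only [List.cons_append, PDFA.stepw, ih, Option.bind_assoc]

theorem PDFA.stepw_singleton {A S : Type} (M : PDFA A S) (s : S) (a : A) :
    M.stepw s [a] = M.step s a := by
  simp [PDFA.stepw]

namespace IDiamond

variable {A S : Type} {M : PDFA A S} {I : A → A → Prop}

theorem stepw_cons_eq_append_singleton (hd : IDiamond M I) {a : A} {y : List A}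
    (h : ∀ b ∈ y, I a b) (s : S) : M.stepw s (a :: y) = M.stepw s (y ++ [a]) := by
  induction y generalizing s with
  | nil => rfl
  | cons b y ih =>
    calc M.stepw s (a :: b :: y)
        = (M.stepw s [a, b]).bind fun t => M.stepw t y := M.stepw_append s [a, b] y
      _ = (M.stepw s [b, a]).bind fun t => M.stepw t y := by rw [hd a b (h b (by simp)) s]
      _ = (M.step s b).bind fun t => M.stepw t (a :: y) := (M.stepw_append s [b, a] y).symm
      _ = (M.step s b).bind fun t => M.stepw t (y ++ [a]) := by
        simp only [ih fun c hc => h c (List.mem_cons_of_mem b hc)]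
      _ = M.stepw s (b :: y ++ [a]) := rfl

theorem stepw_append_comm (hd : IDiamond M I) {x y : List A} (h : ∀ a ∈ x, ∀ b ∈ y, I a b)
    (s : S) : M.stepw s (x ++ y) = M.stepw s (y ++ x) := by
  induction x generalizing s with
  | nil => simp
  | cons a x ih =>
    calc M.stepw s (a :: x ++ y)
        = (M.step s a).bind fun t => M.stepw t (x ++ y) := rfl
      _ = (M.step s a).bind fun t => M.stepw t (y ++ x) := by
        simp only [ih fun c hc => h c (List.mem_cons_of_mem a hc)]
      _ = (M.stepw s (a :: y)).bind fun t => M.stepw t x := M.stepw_append s (a :: y) x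
      _ = (M.stepw s (y ++ [a])).bind fun t => M.stepw t x := by
        rw [hd.stepw_cons_eq_append_singleton (h a (by simp)) s]
      _ = M.stepw s (y ++ a :: x) := by simp [← M.stepw_append]

theorem stepw_append_congr (hd : IDiamond M I) {s : S} {x x' y y' : List A}
    (hx : M.stepw s x = M.stepw s x') (hy : M.stepw s y = M.stepw s y')
    (hxy' : ∀ a ∈ x, ∀ b ∈ y', I a b) (hx'y' : ∀ a ∈ x', ∀ b ∈ y', I a b) :
    M.stepw s (y ++ x) = M.stepw s (y' ++ x') := by
  rw [M.stepw_append, hy, ← M.stepw_append, ← hd.stepw_append_comm hxy', M.stepw_append, hx,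
    ← M.stepw_append, hd.stepw_append_comm hx'y']

end IDiamond

theorem AAut.runw_append_singleton {P A : Type} {dom : A → Set P} {St : P → Type}
    (B : AAut P A dom St) (g : ∀ p, St p) (w : List A) (a : A) :
    B.runw g (w ++ [a]) = (B.runw g w).bind (B.stepG a) := by
  induction w generalizing g with
  | nil => simp [AAut.runw]
  | cons b w ih => simp only [List.cons_append, AAut.runw, ih, Option.bind_assoc]

namespace TreeAsync

open scoped Classical
open SimpleGraph

section Restrict

variable {A : Type}

noncomputable def restrict (U : Set ℕ) (w : List A) : List A :=
  (w.zipIdx.filter fun x => x.2 ∈ U).map Prod.fst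

theorem restrict_append_singleton (U : Set ℕ) (w : List A) (a : A) :
    restrict U (w ++ [a]) = restrict U w ++ if w.length ∈ U then [a] else [] := by
  by_cases h : w.length ∈ U <;> simp [restrict, List.zipIdx_append, h]

theorem restrict_univ (w : List A) : restrict Set.univ w = w := by
  simp [restrict]

theorem restrict_empty (w : List A) : restrict ∅ w = [] := by
  simp [restrict]

theorem restrict_congr {U V : Set ℕ} {w : List A} (h : ∀ i < w.length, i ∈ U ↔ i ∈ V) :
    restrict U w = restrict V w := by
  unfold restrict
  congr 1
  refine List.filter_congr fun x hx => ?_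
  have hlt : x.2 < w.length := by
    rw [List.mem_zipIdx_iff_getElem?] at hx
    exact (List.getElem?_eq_some_iff.1 hx).1
  simp [h x.2 hlt]

theorem exists_getElem?_of_mem_restrict {U : Set ℕ} {w : List A} {b : A}
    (hb : b ∈ restrict U w) : ∃ j ∈ U, w[j]? = some b := by
  simp only [restrict, List.mem_map, List.mem_filter, decide_eq_true_eq] at hb
  obtain ⟨⟨b, j⟩, ⟨hmem, hj⟩, rfl⟩ := hb
  exact ⟨j, hj, List.mem_zipIdx_iff_getElem?.1 hmem⟩

end Restrict

section Causality

variable {P A : Type} (dom : A → Set P)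

def participants (w : List A) (i : ℕ) : Set P := {p | ∃ a ∈ w[i]?, p ∈ dom a}

def Depends (w : List A) (i j : ℕ) : Prop :=
  i < j ∧ (participants dom w i ∩ participants dom w j).Nonempty

def Precedes (w : List A) : ℕ → ℕ → Prop := Relation.ReflTransGen (Depends dom w)

def view (w : List A) (q : P) : Set ℕ :=
  {i | ∃ k, Precedes dom w i k ∧ q ∈ participants dom w k}

def viewOf (w : List A) (Q : Set P) : Set ℕ := ⋃ q ∈ Q, view dom w q

def IsCausallyClosed (w : List A) (U : Set ℕ) : Prop :=
  ∀ i j, Depends dom w i j → j ∈ U → i ∈ U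

variable {dom}

theorem participants_eq_of_getElem? {w : List A} {i : ℕ} {a : A} (h : w[i]? = some a) :
    participants dom w i = dom a := by
  simp [participants, h]

theorem lt_length_of_mem_participants {w : List A} {i : ℕ} {p : P}
    (h : p ∈ participants dom w i) : i < w.length := by
  obtain ⟨a, ha, -⟩ := h
  exact (List.getElem?_eq_some_iff.1 ha).1

theorem participants_append_of_lt {w : List A} (v : List A) {i : ℕ} (h : i < w.length) :
    participants dom (w ++ v) i = participants dom w i := by
  simp [participants, List.getElem?_append_left h]

theorem participants_append_singleton_length (w : List A) (a : A) :
    participants dom (w ++ [a]) w.length = dom a :=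
  participants_eq_of_getElem? (by simp)

theorem Depends.lt_length {w : List A} {i j : ℕ} (h : Depends dom w i j) : j < w.length :=
  lt_length_of_mem_participants h.2.some_mem.2

theorem depends_append_iff {w : List A} (v : List A) {i j : ℕ} (hj : j < w.length) :
    Depends dom (w ++ v) i j ↔ Depends dom w i j := by
  simp only [Depends]
  constructor <;> rintro ⟨hij, h⟩ <;> refine ⟨hij, ?_⟩ <;>
    simpa only [participants_append_of_lt v hj, participants_append_of_lt v (hij.trans hj)] using h

theorem Precedes.le {w : List A} {i j : ℕ} (h : Precedes dom w i j) : i ≤ j := by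
  induction h with
  | refl => exact le_rfl
  | tail _ hdep ih => exact ih.trans hdep.1.le

theorem precedes_append_iff {w : List A} (v : List A) {i j : ℕ} (hj : j < w.length) :
    Precedes dom (w ++ v) i j ↔ Precedes dom w i j := by
  constructor
  · intro h
    induction h using Relation.ReflTransGen.head_induction_on with
    | refl => exact .refl
    | head hdep hrest ih =>
      exact .head ((depends_append_iff v ((Precedes.le hrest).trans_lt hj)).1 hdep) ih
  · exact fun h => Relation.ReflTransGen.mono
      (fun i j hdep => (depends_append_iff v hdep.lt_length).2 hdep) i j h

theorem mem_view_of_mem_participants {w : List A} {q : P} {k : ℕ}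
    (h : q ∈ participants dom w k) : k ∈ view dom w q :=
  ⟨k, .refl, h⟩

theorem participants_nonempty_of_mem_view {w : List A} {q : P} {i : ℕ}
    (h : i ∈ view dom w q) : (participants dom w i).Nonempty := by
  obtain ⟨k, hik, hq⟩ := h
  rcases Relation.ReflTransGen.cases_head hik with rfl | ⟨j, hij, -⟩
  · exact ⟨q, hq⟩
  · exact hij.2.mono Set.inter_subset_left

theorem lt_length_of_mem_view {w : List A} {q : P} {i : ℕ} (h : i ∈ view dom w q) :
    i < w.length :=
  lt_length_of_mem_participants (participants_nonempty_of_mem_view h).some_mem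

theorem viewOf_insert (w : List A) (q : P) (Q : Set P) :
    viewOf dom w (insert q Q) = view dom w q ∪ viewOf dom w Q :=
  Set.biUnion_insert q Q _

theorem lt_length_of_mem_viewOf {w : List A} {Q : Set P} {i : ℕ} (h : i ∈ viewOf dom w Q) :
    i < w.length := by
  obtain ⟨q, -, hq⟩ := Set.mem_iUnion₂.1 h
  exact lt_length_of_mem_view hq

theorem isCausallyClosed_view (w : List A) (q : P) : IsCausallyClosed dom w (view dom w q) :=
  fun _ _ hdep ⟨k, hjk, hq⟩ => ⟨k, .head hdep hjk, hq⟩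

theorem isCausallyClosed_viewOf (w : List A) (Q : Set P) :
    IsCausallyClosed dom w (viewOf dom w Q) := by
  intro i j hdep hj
  obtain ⟨q, hq, hjq⟩ := Set.mem_iUnion₂.1 hj
  exact Set.mem_biUnion hq (isCausallyClosed_view w q i j hdep hjq)

theorem IsCausallyClosed.inter {w : List A} {U V : Set ℕ} (hU : IsCausallyClosed dom w U)
    (hV : IsCausallyClosed dom w V) : IsCausallyClosed dom w (U ∩ V) :=
  fun i j hdep hj => ⟨hU i j hdep hj.1, hV i j hdep hj.2⟩

theorem IsCausallyClosed.union {w : List A} {U V : Set ℕ} (hU : IsCausallyClosed dom w U)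
    (hV : IsCausallyClosed dom w V) : IsCausallyClosed dom w (U ∪ V) :=
  fun i j hdep hj => hj.imp (hU i j hdep) (hV i j hdep)

theorem IsCausallyClosed.of_append {w : List A} {v : List A} {U : Set ℕ}
    (hU : IsCausallyClosed dom (w ++ v) U) : IsCausallyClosed dom w U :=
  fun i j hdep hj => hU i j ((depends_append_iff v hdep.lt_length).2 hdep) hj

theorem mem_participants_append_singleton {w : List A} {a : A} {p : P} {k : ℕ}
    (h : p ∈ participants dom (w ++ [a]) k) :
    (k < w.length ∧ p ∈ participants dom w k) ∨ (k = w.length ∧ p ∈ dom a) := by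
  have hk := lt_length_of_mem_participants h
  rw [List.length_append, List.length_singleton] at hk
  rcases Nat.lt_succ_iff_lt_or_eq.1 hk with hk | rfl
  · exact .inl ⟨hk, by rwa [participants_append_of_lt _ hk] at h⟩
  · exact .inr ⟨rfl, by rwa [participants_append_singleton_length] at h⟩

theorem view_append_singleton_of_notMem {w : List A} {a : A} {q : P} (hq : q ∉ dom a) :
    view dom (w ++ [a]) q = view dom w q := by
  ext i
  constructor
  · rintro ⟨k, hik, hqk⟩
    rcases mem_participants_append_singleton hqk with ⟨hk, hqk⟩ | ⟨-, hqa⟩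
    · exact ⟨k, (precedes_append_iff _ hk).1 hik, hqk⟩
    · exact absurd hqa hq
  · rintro ⟨k, hik, hqk⟩
    have hk := lt_length_of_mem_participants hqk
    exact ⟨k, (precedes_append_iff _ hk).2 hik, by rwa [participants_append_of_lt _ hk]⟩

theorem view_append_singleton_of_mem {w : List A} {a : A} {q : P} (hq : q ∈ dom a) :
    view dom (w ++ [a]) q = insert w.length (viewOf dom w (dom a)) := by
  ext i
  simp only [Set.mem_insert_iff, viewOf, Set.mem_iUnion₂, exists_prop]
  constructor
  · rintro ⟨k, hik, hqk⟩
    rcases mem_participants_append_singleton hqk with ⟨hk, hqk⟩ | ⟨rfl, -⟩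
    · exact .inr ⟨q, hq, k, (precedes_append_iff _ hk).1 hik, hqk⟩
    rcases Relation.ReflTransGen.cases_tail hik with rfl | ⟨j, hij, hj, q', hq'j, hq'a⟩
    · exact .inl rfl
    rw [participants_append_of_lt _ hj] at hq'j
    rw [participants_append_singleton_length] at hq'a
    exact .inr ⟨q', hq'a, j, (precedes_append_iff _ hj).1 hij, hq'j⟩
  · have hlast : q ∈ participants dom (w ++ [a]) w.length := by
      rwa [participants_append_singleton_length]
    rintro (rfl | ⟨q', hq', k, hik, hq'k⟩)
    · exact mem_view_of_mem_participants hlast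
    · have hk := lt_length_of_mem_participants hq'k
      refine ⟨w.length, .tail ((precedes_append_iff _ hk).2 hik) ⟨hk, q', ?_, ?_⟩, hlast⟩
      · rwa [participants_append_of_lt _ hk]
      · rwa [participants_append_singleton_length]

theorem exists_crossing_of_mem_view {w : List A} {C : Set P} {α : P} {e : ℕ}
    (he : e ∈ view dom w α) (hα : α ∈ C) (heC : ¬ participants dom w e ⊆ C) :
    ∃ m, Precedes dom w e m ∧ (participants dom w m ∩ C).Nonempty ∧
      ¬ participants dom w m ⊆ C := by
  obtain ⟨k, hek, hαk⟩ := he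
  induction hek using Relation.ReflTransGen.head_induction_on with
  | refl => exact ⟨k, .refl, ⟨α, hαk, hα⟩, heC⟩
  | @head e j hdep hjk ih =>
    by_cases hmeet : (participants dom w e ∩ C).Nonempty
    · exact ⟨e, .refl, hmeet, heC⟩
    · obtain ⟨p, hpe, hpj⟩ := hdep.2
      obtain ⟨m, hjm, hm⟩ := ih fun hj => hmeet ⟨p, hpe, hj hpj⟩
      exact ⟨m, .head hdep hjm, hm⟩

end Causality

section States

variable {P A S : Type} {dom : A → Set P} (M : PDFA A S)

noncomputable def stateOn (w : List A) (U : Set ℕ) : Option S := M.stepw M.s0 (restrict U w)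

variable {M}

theorem inter_eq_empty_of_mem_restrict {w : List A} {a : A} {U V : Set ℕ}
    (hU : IsCausallyClosed dom (w ++ [a]) U) (hn : w.length ∈ U) {b : A}
    (hb : b ∈ restrict (V \ U) w) : dom a ∩ dom b = ∅ := by
  obtain ⟨j, ⟨-, hjU⟩, hj⟩ := exists_getElem?_of_mem_restrict hb
  have hjn : j < w.length := (List.getElem?_eq_some_iff.1 hj).1
  by_contra hab
  refine hjU (hU j w.length ⟨hjn, ?_⟩ hn)
  rw [participants_append_of_lt _ hjn, participants_eq_of_getElem? hj,
    participants_append_singleton_length, Set.inter_comm]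
  exact Set.nonempty_iff_ne_empty.2 hab

theorem stepw_restrict_eq_append (hd : IDiamond M fun a b => dom a ∩ dom b = ∅) (w : List A)
    {Z U : Set ℕ} (hZ : IsCausallyClosed dom w Z) (hU : IsCausallyClosed dom w U) (hUZ : U ⊆ Z)
    (s : S) : M.stepw s (restrict Z w) = M.stepw s (restrict U w ++ restrict (Z \ U) w) := by
  induction w using List.reverseRecOn generalizing s with
  | nil => simp [restrict]
  | append_singleton w a ih =>
    have ih := ih hZ.of_append hU.of_append
    simp only [restrict_append_singleton, Set.mem_sdiff]
    by_cases hnU : w.length ∈ U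
    · simp only [hUZ hnU, hnU, if_true, not_true, and_false, if_false, List.append_nil]
      calc M.stepw s (restrict Z w ++ [a])
          = (M.stepw s (restrict U w ++ restrict (Z \ U) w)).bind fun t => M.stepw t [a] := by
            rw [M.stepw_append, ih]
        _ = (M.stepw s (restrict U w)).bind fun t => M.stepw t (restrict (Z \ U) w ++ [a]) := by
            rw [← M.stepw_append, List.append_assoc, M.stepw_append]
        _ = (M.stepw s (restrict U w)).bind fun t => M.stepw t (a :: restrict (Z \ U) w) := by
            simp only [hd.stepw_cons_eq_append_singleton
              fun b hb => inter_eq_empty_of_mem_restrict hU hnU hb]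
        _ = M.stepw s (restrict U w ++ [a] ++ restrict (Z \ U) w) := by
            rw [List.append_assoc, List.singleton_append, M.stepw_append]
    · by_cases hnZ : w.length ∈ Z
      · simp only [hnZ, hnU, if_true, if_false, not_false_eq_true, and_self, List.append_nil]
        rw [M.stepw_append, ih, ← M.stepw_append, List.append_assoc]
      · simp only [hnZ, hnU, if_false, false_and, List.append_nil]
        exact ih s

theorem stateOn_eq_bind (hd : IDiamond M fun a b => dom a ∩ dom b = ∅) {w : List A}
    {Z U : Set ℕ} (hZ : IsCausallyClosed dom w Z) (hU : IsCausallyClosed dom w U)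
    (hUZ : U ⊆ Z) :
    stateOn M w Z = (stateOn M w U).bind fun s => M.stepw s (restrict (Z \ U) w) := by
  rw [stateOn, stepw_restrict_eq_append hd w hZ hU hUZ, M.stepw_append, stateOn]

theorem stateOn_eq_bind_inter (hd : IDiamond M fun a b => dom a ∩ dom b = ∅) {w : List A}
    {U V : Set ℕ} (hU : IsCausallyClosed dom w U) (hV : IsCausallyClosed dom w V) :
    stateOn M w U = (stateOn M w (U ∩ V)).bind fun s => M.stepw s (restrict (U \ V) w) := by
  rw [stateOn_eq_bind hd hU (hU.inter hV) Set.inter_subset_left, Set.sdiff_self_inter]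

theorem stateOn_union (hd : IDiamond M fun a b => dom a ∩ dom b = ∅) {w : List A}
    {U V : Set ℕ} (hU : IsCausallyClosed dom w U) (hV : IsCausallyClosed dom w V) :
    stateOn M w (U ∪ V) = (stateOn M w (U ∩ V)).bind
      fun s => M.stepw s (restrict (U \ V) w ++ restrict (V \ U) w) := by
  rw [stateOn_eq_bind hd (hU.union hV) hU Set.subset_union_left, Set.union_sdiff_left,
    stateOn_eq_bind_inter hd hU hV, Option.bind_assoc]
  simp only [M.stepw_append]

theorem stateOn_union_eq (hd : IDiamond M fun a b => dom a ∩ dom b = ∅) {w w' : List A}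
    {U V U' V' : Set ℕ} (hU : IsCausallyClosed dom w U) (hV : IsCausallyClosed dom w V)
    (hU' : IsCausallyClosed dom w' U') (hV' : IsCausallyClosed dom w' V')
    (hinter : stateOn M w (U ∩ V) = stateOn M w' (U' ∩ V'))
    (hUeq : stateOn M w U = stateOn M w' U') (hVeq : stateOn M w V = stateOn M w' V')
    (hindep : ∀ a ∈ restrict (V \ U) w, ∀ b ∈ restrict (U' \ V') w', dom a ∩ dom b = ∅)
    (hindep' :
      ∀ a ∈ restrict (V' \ U') w', ∀ b ∈ restrict (U' \ V') w', dom a ∩ dom b = ∅) :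
    stateOn M w (U ∪ V) = stateOn M w' (U' ∪ V') := by
  rw [stateOn_eq_bind_inter hd hU hV, stateOn_eq_bind_inter hd hU' hV', hinter] at hUeq
  rw [stateOn_eq_bind_inter hd hV hU, stateOn_eq_bind_inter hd hV' hU', Set.inter_comm V,
    Set.inter_comm V', hinter] at hVeq
  rw [stateOn_union hd hU hV, stateOn_union hd hU' hV', hinter]
  rcases hk : stateOn M w' (U' ∩ V') with _ | k
  · rfl
  · simp only [hk, Option.bind_some] at hUeq hVeq ⊢
    exact hd.stepw_append_congr hVeq hUeq hindep hindep'

theorem stateOn_append_singleton_of_lt {w : List A} {a : A} {U : Set ℕ}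
    (h : ∀ i ∈ U, i < w.length) : stateOn M (w ++ [a]) U = stateOn M w U := by
  have hn : w.length ∉ U := fun hn => lt_irrefl _ (h _ hn)
  simp [stateOn, restrict_append_singleton, hn]

theorem stateOn_append_singleton_insert (w : List A) (a : A) (U : Set ℕ) :
    stateOn M (w ++ [a]) (insert w.length U) = (stateOn M w U).bind fun s => M.step s a := by
  have hU : restrict (insert w.length U) w = restrict U w :=
    restrict_congr fun i hi => by
      simp only [Set.mem_insert_iff, or_iff_right_iff_imp]
      exact fun hi' => absurd hi (hi' ▸ lt_irrefl _)
  simp [stateOn, restrict_append_singleton, hU, M.stepw_append, M.stepw_singleton]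

theorem stateOn_eq_stepw {w : List A} {U : Set ℕ} (h : ∀ i < w.length, i ∈ U) :
    stateOn M w U = M.stepw M.s0 w := by
  rw [stateOn, restrict_congr (V := Set.univ) fun i hi => by simp [h i hi], restrict_univ]

theorem stateOn_empty (w : List A) : stateOn M w ∅ = some M.s0 := by
  simp [stateOn, restrict_empty, PDFA.stepw]

theorem stateOn_nil (U : Set ℕ) : stateOn M [] U = some M.s0 := by
  simp [stateOn, restrict, PDFA.stepw]

theorem isSome_stateOn (hd : IDiamond M fun a b => dom a ∩ dom b = ∅) {w : List A}
    (hw : (M.stepw M.s0 w).isSome) {U : Set ℕ} (hU : IsCausallyClosed dom w U) :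
    (stateOn M w U).isSome := by
  have hsplit := stateOn_eq_bind hd (fun _ _ _ _ => trivial) hU (Set.subset_univ U)
  rw [stateOn_eq_stepw fun _ _ => trivial] at hsplit
  rw [hsplit] at hw
  exact Option.isSome_of_isSome_bind hw

end States

section RootedTree

variable {P : Type} {T : SimpleGraph P} (hT : T.IsTree) (r : P)

noncomputable def rootPath (v : P) : T.Walk v r := (hT.existsUnique_path v r).choose

noncomputable def parent (v : P) : P := (rootPath hT r v).snd

noncomputable def depth (v : P) : ℕ := (rootPath hT r v).length

def subtree (c : P) : Set P := {x | c ∈ (rootPath hT r x).support}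

variable {hT r}

theorem rootPath_isPath (v : P) : (rootPath hT r v).IsPath :=
  (hT.existsUnique_path v r).choose_spec.1

theorem eq_rootPath {v : P} {p : T.Walk v r} (hp : p.IsPath) : p = rootPath hT r v :=
  (hT.existsUnique_path v r).choose_spec.2 p hp

theorem rootPath_root : rootPath hT r r = .nil :=
  (eq_rootPath .nil).symm

theorem parent_root : parent hT r r = r := by
  simp [parent, rootPath_root]

theorem adj_parent {v : P} (hv : v ≠ r) : T.Adj v (parent hT r v) :=
  Walk.adj_snd (Walk.not_nil_of_ne hv)

theorem rootPath_eq_cons {v : P} (hv : v ≠ r) :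
    rootPath hT r v = .cons (adj_parent hv) (rootPath hT r (parent hT r v)) := by
  have hnil := Walk.not_nil_of_ne (p := rootPath hT r v) hv
  have htail : (rootPath hT r v).tail = rootPath hT r (parent hT r v) :=
    eq_rootPath (rootPath_isPath v).tail
  conv_lhs => rw [← Walk.cons_tail_eq _ hnil]
  simp only [htail]
  rfl

theorem support_rootPath_of_ne {v : P} (hv : v ≠ r) :
    (rootPath hT r v).support = v :: (rootPath hT r (parent hT r v)).support := by
  rw [rootPath_eq_cons hv, Walk.support_cons]

theorem depth_parent {v : P} (hv : v ≠ r) : depth hT r (parent hT r v) + 1 = depth hT r v := by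
  rw [depth, depth, rootPath_eq_cons hv, Walk.length_cons]

theorem mem_subtree_self (x : P) : x ∈ subtree hT r x :=
  Walk.start_mem_support _

theorem mem_subtree_root (x : P) : x ∈ subtree hT r r :=
  Walk.end_mem_support _

theorem eq_root_of_root_mem_subtree {c : P} (h : r ∈ subtree hT r c) : c = r := by
  simpa [subtree, rootPath_root] using h

theorem dropUntil_rootPath {x c : P} (h : x ∈ subtree hT r c) :
    (rootPath hT r x).dropUntil c h = rootPath hT r c :=
  eq_rootPath ((rootPath_isPath x).dropUntil h)

theorem subtree_subset {x c : P} (h : x ∈ subtree hT r c) :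
    subtree hT r x ⊆ subtree hT r c := by
  intro y hy
  have h' : c ∈ (rootPath hT r x).support := h
  rw [← dropUntil_rootPath hy] at h'
  exact (rootPath hT r y).support_dropUntil_subset_support hy h'

theorem depth_lt_of_mem_subtree {x c : P} (h : x ∈ subtree hT r c) (hne : x ≠ c) :
    depth hT r c < depth hT r x := by
  have hlen := congrArg Walk.length ((rootPath hT r x).take_spec h)
  rw [Walk.length_append, dropUntil_rootPath] at hlen
  have : ((rootPath hT r x).takeUntil c h).length ≠ 0 :=
    fun h0 => hne (Walk.eq_of_length_eq_zero h0)
  unfold depth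
  omega

theorem eq_of_mem_subtree_of_mem_subtree {x c : P} (hx : x ∈ subtree hT r c)
    (hc : c ∈ subtree hT r x) : x = c := by
  by_contra hne
  have := depth_lt_of_mem_subtree hx hne
  have := depth_lt_of_mem_subtree hc (Ne.symm hne)
  omega

theorem ne_root_of_mem_subtree {x c : P} (h : x ∈ subtree hT r c) (hne : x ≠ c) : x ≠ r := by
  rintro rfl
  exact hne (eq_root_of_root_mem_subtree h).symm

theorem parent_mem_subtree {x c : P} (h : x ∈ subtree hT r c) (hne : x ≠ c) :
    parent hT r x ∈ subtree hT r c := by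
  have h' : c ∈ (rootPath hT r x).support := h
  rw [support_rootPath_of_ne (ne_root_of_mem_subtree h hne)] at h'
  exact (List.mem_cons.1 h').resolve_left (Ne.symm hne)

theorem mem_subtree_parent {c : P} (hc : c ≠ r) : c ∈ subtree hT r (parent hT r c) := by
  show _ ∈ (rootPath hT r c).support
  rw [support_rootPath_of_ne hc]
  exact List.mem_cons_of_mem _ (Walk.start_mem_support _)

theorem parent_notMem_subtree {c : P} (hc : c ≠ r) : parent hT r c ∉ subtree hT r c := by
  intro h
  have := depth_lt_of_mem_subtree h (adj_parent hc).ne.symm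
  have := depth_parent (hT := hT) hc
  omega

theorem eq_of_adj_of_mem_subtree {u v c : P} (huv : T.Adj u v) (hu : u ∈ subtree hT r c)
    (hv : v ∉ subtree hT r c) : u = c ∧ v = parent hT r c := by
  have hu' : u ∉ (rootPath hT r v).support := fun h => hv (subtree_subset hu h)
  have hpath := eq_rootPath (hT := hT) ((Walk.cons_isPath_iff huv _).2 ⟨rootPath_isPath v, hu'⟩)
  have hc : c ∈ (rootPath hT r u).support := hu
  rw [← hpath, Walk.support_cons, List.mem_cons] at hc
  obtain rfl : u = c := hc.resolve_right hv |>.symm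
  exact ⟨rfl, by rw [parent, ← hpath, Walk.snd_cons]⟩

theorem mem_of_mem_subtree_of_notMem_subtree {D : Set P} (hD : (T.induce D).Connected)
    {c x y : P} (hx : x ∈ D) (hxc : x ∈ subtree hT r c) (hy : y ∈ D)
    (hyc : y ∉ subtree hT r c) : c ∈ D ∧ parent hT r c ∈ D := by
  obtain ⟨d, -, hd1, hd2⟩ := (hD.preconnected ⟨x, hx⟩ ⟨y, hy⟩).some.exists_boundary_dart
    {z | z.1 ∈ subtree hT r c} hxc hyc
  obtain ⟨h1, h2⟩ := eq_of_adj_of_mem_subtree (induce_adj.1 d.adj) hd1 hd2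
  exact ⟨h1 ▸ d.fst.2, h2 ▸ d.snd.2⟩

theorem exists_subset_subtree {D : Set P} (hD : (T.induce D).Connected) :
    ∃ ρ ∈ D, D ⊆ subtree hT r ρ := by
  have hne : D.Nonempty := Set.nonempty_coe_sort.1 hD.nonempty
  obtain ⟨ρ, hρD, hmin⟩ : ∃ ρ ∈ D, ∀ q ∈ D, depth hT r ρ ≤ depth hT r q :=
    ⟨_, Function.argminOn_mem _ _ hne, fun q hq => not_lt.1 (Function.not_lt_argminOn _ _ hq)⟩
  refine ⟨ρ, hρD, fun q hq => ?_⟩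
  by_contra hqρ
  have hρr : ρ ≠ r := fun h => hqρ (h ▸ mem_subtree_root q)
  have hpar := (mem_of_mem_subtree_of_notMem_subtree hD hρD (mem_subtree_self ρ) hq hqρ).2
  have := hmin _ hpar
  have := depth_parent (hT := hT) hρr
  omega

end RootedTree

section TreeViews

variable {P A : Type} (dom : A → Set P) {T : SimpleGraph P} (hT : T.IsTree) (r : P)

/-- Since `parent` maps the root to itself, at the root this is the whole view. -/
def sharedView (w : List A) (p : P) : Set ℕ := view dom w p ∩ view dom w (parent hT r p)

variable {dom hT r}

theorem sharedView_append_singleton_of_mem {w : List A} {a : A} {p : P} (hp : p ∈ dom a)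
    (hpar : parent hT r p ∈ dom a) :
    sharedView dom hT r (w ++ [a]) p = insert w.length (viewOf dom w (dom a)) := by
  rw [sharedView, view_append_singleton_of_mem hp, view_append_singleton_of_mem hpar,
    Set.inter_self]

theorem isCausallyClosed_sharedView (w : List A) (p : P) :
    IsCausallyClosed dom w (sharedView dom hT r w p) :=
  (isCausallyClosed_view w p).inter (isCausallyClosed_view w _)

theorem lt_length_of_mem_sharedView {w : List A} {p : P} {i : ℕ}
    (h : i ∈ sharedView dom hT r w p) : i < w.length :=
  lt_length_of_mem_view h.1

variable (hconn : ∀ a, (T.induce (dom a)).Connected)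
include hconn

theorem mem_sharedView_of_precedes {w : List A} {c : P} {e m : ℕ} (hem : Precedes dom w e m)
    (hin : (participants dom w m ∩ subtree hT r c).Nonempty)
    (hout : ¬ participants dom w m ⊆ subtree hT r c) : e ∈ sharedView dom hT r w c := by
  obtain ⟨x, ⟨a, ha, hxa⟩, hxc⟩ := hin
  rw [participants_eq_of_getElem? ha] at hout
  obtain ⟨y, hya, hyc⟩ := Set.not_subset.1 hout
  obtain ⟨hca, hpa⟩ := mem_of_mem_subtree_of_notMem_subtree (hconn a) hxa hxc hya hyc
  exact ⟨⟨m, hem, a, ha, hca⟩, ⟨m, hem, a, ha, hpa⟩⟩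

theorem mem_sharedView_of_mem_view_of_not_subset {w : List A} {c α : P} {e : ℕ}
    (he : e ∈ view dom w α) (hα : α ∈ subtree hT r c)
    (hout : ¬ participants dom w e ⊆ subtree hT r c) : e ∈ sharedView dom hT r w c := by
  obtain ⟨m, hem, hin, hout⟩ := exists_crossing_of_mem_view he hα hout
  exact mem_sharedView_of_precedes hconn hem hin hout

theorem mem_sharedView_of_mem_view_of_inter_nonempty {w : List A} {c β : P} {e : ℕ}
    (he : e ∈ view dom w β) (hβ : β ∉ subtree hT r c)
    (hin : (participants dom w e ∩ subtree hT r c).Nonempty) : e ∈ sharedView dom hT r w c := by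
  have hnot : ¬ participants dom w e ⊆ (subtree hT r c)ᶜ := by
    rwa [← Set.inter_compl_nonempty_iff, compl_compl]
  obtain ⟨m, hem, hout, hin⟩ :=
    exists_crossing_of_mem_view he (C := (subtree hT r c)ᶜ) hβ hnot
  rw [← Set.inter_compl_nonempty_iff, compl_compl] at hin
  exact mem_sharedView_of_precedes hconn hem hin (Set.inter_compl_nonempty_iff.1 hout)

theorem mem_sharedView_of_mem_view_of_mem_view {w : List A} {c α β : P} {e : ℕ}
    (hα : α ∈ subtree hT r c) (hβ : β ∉ subtree hT r c) (heα : e ∈ view dom w α)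
    (heβ : e ∈ view dom w β) : e ∈ sharedView dom hT r w c := by
  by_cases hsub : participants dom w e ⊆ subtree hT r c
  · refine mem_sharedView_of_mem_view_of_inter_nonempty hconn heβ hβ ?_
    rw [Set.inter_eq_left.2 hsub]
    exact participants_nonempty_of_mem_view heα
  · exact mem_sharedView_of_mem_view_of_not_subset hconn heα hα hsub

theorem viewOf_inter_view_eq_sharedView {L : Set P} {q : P} (hpar : parent hT r q ∈ L)
    (hL : ∀ q' ∈ L, q' ∉ subtree hT r q) (w : List A) :
    viewOf dom w L ∩ view dom w q = sharedView dom hT r w q := by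
  refine Set.Subset.antisymm (fun e ⟨he, heq⟩ => ?_) fun e ⟨heq, hep⟩ =>
    ⟨Set.mem_biUnion hpar hep, heq⟩
  obtain ⟨q', hq', heq'⟩ := Set.mem_iUnion₂.1 he
  exact mem_sharedView_of_mem_view_of_mem_view hconn (mem_subtree_self q) (hL q' hq') heq heq'

theorem viewOf_inter_view_parent_eq_sharedView {L : Set P} {p : P} (hp : p ∈ L) (hpr : p ≠ r)
    (hL : L ⊆ subtree hT r p) (w : List A) :
    viewOf dom w L ∩ view dom w (parent hT r p) = sharedView dom hT r w p := by
  refine Set.Subset.antisymm (fun e ⟨he, hep⟩ => ?_) fun e ⟨heq, hep⟩ =>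
    ⟨Set.mem_biUnion hp heq, hep⟩
  obtain ⟨q', hq', heq'⟩ := Set.mem_iUnion₂.1 he
  exact mem_sharedView_of_mem_view_of_mem_view hconn (hL hq') (parent_notMem_subtree hpr) heq'
    hep

theorem sharedView_append_singleton_of_notMem {w : List A} {a : A} {p : P}
    (h : ¬ (p ∈ dom a ∧ parent hT r p ∈ dom a)) :
    sharedView dom hT r (w ++ [a]) p = sharedView dom hT r w p := by
  have hnew : ∀ {q}, w.length ∉ view dom w q := fun h => (lt_length_of_mem_view h).ne rfl
  by_cases hp : p ∈ dom a
  · have hpar : parent hT r p ∉ dom a := fun h' => h ⟨hp, h'⟩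
    have hpr : p ≠ r := by rintro rfl; rw [parent_root] at hpar; exact hpar hp
    have hsub : dom a ⊆ subtree hT r p := fun q hq => by
      by_contra hqp
      exact hpar (mem_of_mem_subtree_of_notMem_subtree (hconn a) hp (mem_subtree_self p)
        hq hqp).2
    rw [sharedView, view_append_singleton_of_mem hp, view_append_singleton_of_notMem hpar,
      Set.insert_inter_of_notMem hnew, viewOf_inter_view_parent_eq_sharedView hconn hp hpr hsub]
  by_cases hpar : parent hT r p ∈ dom a
  · have hpr : p ≠ r := by rintro rfl; rw [parent_root] at hpar; exact hp hpar
    have hdisj : ∀ q ∈ dom a, q ∉ subtree hT r p := fun q hq hqp =>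
      hp (mem_of_mem_subtree_of_notMem_subtree (hconn a) hq hqp hpar
        (parent_notMem_subtree hpr)).1
    rw [sharedView, view_append_singleton_of_notMem hp, view_append_singleton_of_mem hpar,
      Set.inter_insert_of_notMem hnew, Set.inter_comm,
      viewOf_inter_view_eq_sharedView hconn hpar hdisj]
  rw [sharedView, sharedView, view_append_singleton_of_notMem hp,
    view_append_singleton_of_notMem hpar]

end TreeViews

section LocalStates

variable {P A S : Type} (dom : A → Set P) (M : PDFA A S) {T : SimpleGraph P} (hT : T.IsTree)
  (r : P)

/-- The pair `(s_p, t_p)` of the paper. Where `M` is stuck, `s₀` stands in; `IsLocallyDefined`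
excludes this for the configurations the automaton reaches. -/
noncomputable def localState (w : List A) (p : P) : S × S :=
  ((stateOn M w (sharedView dom hT r w p)).getD M.s0, (stateOn M w (view dom w p)).getD M.s0)

def IsLocallyDefined (w : List A) : Prop :=
  ∀ p, (stateOn M w (view dom w p)).isSome ∧ (stateOn M w (sharedView dom hT r w p)).isSome

noncomputable def nextState (w : List A) (a : A) : Option S :=
  (stateOn M w (viewOf dom w (dom a))).bind fun s => M.step s a

variable {dom M hT r}

theorem localState_nil (p : P) : localState dom M hT r [] p = (M.s0, M.s0) := by
  simp [localState, stateOn_nil]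

theorem isLocallyDefined_nil : IsLocallyDefined dom M hT r [] := fun p => by
  simp [stateOn_nil]

theorem isLocallyDefined_of_isSome (hd : IDiamond M fun a b => dom a ∩ dom b = ∅)
    {w : List A} (hw : (M.stepw M.s0 w).isSome) : IsLocallyDefined dom M hT r w := fun p =>
  ⟨isSome_stateOn hd hw (isCausallyClosed_view w p),
    isSome_stateOn hd hw (isCausallyClosed_sharedView w p)⟩

theorem isSome_nextState (hd : IDiamond M fun a b => dom a ∩ dom b = ∅) {a : A}
    (ha : (dom a).Nonempty) {w : List A} (hw : (M.stepw M.s0 (w ++ [a])).isSome) :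
    (nextState dom M w a).isSome := by
  obtain ⟨q, hq⟩ := ha
  have := isSome_stateOn hd hw (isCausallyClosed_view (w ++ [a]) q)
  rwa [view_append_singleton_of_mem hq, stateOn_append_singleton_insert] at this

theorem stateOn_eq_of_localState_eq {w w' : List A} (hw : IsLocallyDefined dom M hT r w)
    (hw' : IsLocallyDefined dom M hT r w') {p : P}
    (h : localState dom M hT r w p = localState dom M hT r w' p) :
    stateOn M w (sharedView dom hT r w p) = stateOn M w' (sharedView dom hT r w' p) ∧
      stateOn M w (view dom w p) = stateOn M w' (view dom w' p) := by
  have getD_inj : ∀ {o o' : Option S}, o.isSome → o'.isSome →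
      o.getD M.s0 = o'.getD M.s0 → o = o' := by
    rintro (_ | _) (_ | _) <;> simp
  rw [localState, localState, Prod.ext_iff] at h
  exact ⟨getD_inj (hw p).2 (hw' p).2 h.1, getD_inj (hw p).1 (hw' p).1 h.2⟩

variable (hconn : ∀ a, (T.induce (dom a)).Connected)
include hconn

theorem localState_append_singleton_of_notMem {w : List A} {a : A} {p : P} (hp : p ∉ dom a) :
    localState dom M hT r (w ++ [a]) p = localState dom M hT r w p := by
  rw [localState, localState, view_append_singleton_of_notMem hp,
    sharedView_append_singleton_of_notMem hconn fun h => hp h.1,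
    stateOn_append_singleton_of_lt fun _ => lt_length_of_mem_view,
    stateOn_append_singleton_of_lt fun _ => lt_length_of_mem_sharedView]

/-- The transition of the paper, where the root of `T_a` is the participant whose parent does not
participate. -/
theorem localState_append_singleton_of_mem {w : List A} {a : A} {p : P} (hp : p ∈ dom a) :
    localState dom M hT r (w ++ [a]) p =
      (if parent hT r p ∈ dom a then (nextState dom M w a).getD M.s0
        else (localState dom M hT r w p).1, (nextState dom M w a).getD M.s0) := by
  have hview : stateOn M (w ++ [a]) (view dom (w ++ [a]) p) = nextState dom M w a := by
    rw [view_append_singleton_of_mem hp, stateOn_append_singleton_insert, nextState]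
  split_ifs with hpar
  · rw [localState, hview, sharedView_append_singleton_of_mem hp hpar,
      stateOn_append_singleton_insert, nextState]
  · rw [localState, hview, sharedView_append_singleton_of_notMem hconn fun h => hpar h.2,
      stateOn_append_singleton_of_lt fun _ => lt_length_of_mem_sharedView,
      localState]

theorem IsLocallyDefined.append_singleton {w : List A} {a : A}
    (hw : IsLocallyDefined dom M hT r w) (hnext : (nextState dom M w a).isSome) :
    IsLocallyDefined dom M hT r (w ++ [a]) := by
  intro p
  by_cases hp : p ∈ dom a
  · rw [view_append_singleton_of_mem hp, stateOn_append_singleton_insert]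
    refine ⟨hnext, ?_⟩
    by_cases hpar : parent hT r p ∈ dom a
    · rwa [sharedView_append_singleton_of_mem hp hpar, stateOn_append_singleton_insert]
    · rw [sharedView_append_singleton_of_notMem hconn fun h => hpar h.2,
        stateOn_append_singleton_of_lt fun _ => lt_length_of_mem_sharedView]
      exact (hw p).2
  · rw [view_append_singleton_of_notMem hp,
      sharedView_append_singleton_of_notMem hconn fun h => hp h.1,
      stateOn_append_singleton_of_lt fun _ => lt_length_of_mem_view,
      stateOn_append_singleton_of_lt fun _ => lt_length_of_mem_sharedView]
    exact hw p

end LocalStates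

section Merge

variable {P A S : Type} {dom : A → Set P} {M : PDFA A S} {T : SimpleGraph P} {hT : T.IsTree}
  {r : P}

variable (hT r) in
def IsRootedAt (ρ : P) (s : Finset P) : Prop :=
  ∀ q ∈ s, q ∈ subtree hT r ρ ∧ (q ≠ ρ → parent hT r q ∈ s)

theorem exists_isRootedAt_superset {D : Set P} (hD : (T.induce D).Connected) {ρ : P}
    (hρ : ρ ∈ D) (hDρ : D ⊆ subtree hT r ρ) (F : Finset P) (hF : ↑F ⊆ D) :
    ∃ s, IsRootedAt hT r ρ s ∧ F ⊆ s ∧ ↑s ⊆ D := by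
  set s := F.biUnion fun q => (rootPath hT r q).support.toFinset.filter (· ∈ subtree hT r ρ)
  have hmem : ∀ z, z ∈ s ↔ ∃ q ∈ F, q ∈ subtree hT r z ∧ z ∈ subtree hT r ρ := by
    intro z
    simp only [s, Finset.mem_biUnion, Finset.mem_filter, List.mem_toFinset]
    rfl
  refine ⟨s, fun z hz => ?_, fun q hq => (hmem q).2 ⟨q, hq, mem_subtree_self q, hDρ (hF hq)⟩,
    fun z hz => ?_⟩
  · obtain ⟨q, hqF, hqz, hzρ⟩ := (hmem z).1 hz
    refine ⟨hzρ, fun hne => (hmem _).2 ⟨q, hqF, ?_, parent_mem_subtree hzρ hne⟩⟩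
    exact subtree_subset (mem_subtree_parent (ne_root_of_mem_subtree hzρ hne)) hqz
  · obtain ⟨q, hqF, hqz, hzρ⟩ := (hmem z).1 hz
    by_cases hne : z = ρ
    · exact hne ▸ hρ
    have hρz : ρ ∉ subtree hT r z := fun h => hne (eq_of_mem_subtree_of_mem_subtree hzρ h)
    exact (mem_of_mem_subtree_of_notMem_subtree hD (hF hqF) hqz hρ hρz).1

theorem exists_finset_viewOf_eq (w : List A) (D : Set P) :
    ∃ F : Finset P, ↑F ⊆ D ∧ viewOf dom w F = viewOf dom w D := by
  have hfin : (viewOf dom w D).Finite :=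
    (Set.finite_lt_nat w.length).subset fun _ => lt_length_of_mem_viewOf
  obtain ⟨I, hI, hcov⟩ := Set.finite_subset_iUnion hfin (t := fun q : D => view dom w q)
    fun i hi => by
      obtain ⟨q, hq, hiq⟩ := Set.mem_iUnion₂.1 hi
      exact Set.mem_iUnion.2 ⟨⟨q, hq⟩, hiq⟩
  have hsub : ↑(hI.toFinset.map (.subtype _)) ⊆ D := fun q hq => by
    simp only [Finset.coe_map, Set.mem_image] at hq
    obtain ⟨q', -, rfl⟩ := hq
    exact q'.2
  refine ⟨_, hsub, Set.Subset.antisymm (Set.biUnion_subset_biUnion_left hsub) fun i hi => ?_⟩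
  obtain ⟨q, hqI, hiq⟩ := Set.mem_iUnion₂.1 (hcov hi)
  exact Set.mem_biUnion (by simpa using hqI) hiq

variable (hconn : ∀ a, (T.induce (dom a)).Connected)
include hconn

theorem subset_subtree_of_mem_restrict {L : Set P} {q : P} (hpar : parent hT r q ∈ L)
    {w : List A} {b : A} (hb : b ∈ restrict (view dom w q \ viewOf dom w L) w) :
    dom b ⊆ subtree hT r q := by
  obtain ⟨j, ⟨hjq, hjL⟩, hj⟩ := exists_getElem?_of_mem_restrict hb
  rw [← participants_eq_of_getElem? (dom := dom) hj]
  by_contra hout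
  exact hjL (Set.mem_biUnion hpar
    (mem_sharedView_of_mem_view_of_not_subset hconn hjq (mem_subtree_self q) hout).2)

theorem inter_subtree_eq_empty_of_mem_restrict {L : Set P} {q : P}
    (hL : ∀ q' ∈ L, q' ∉ subtree hT r q) {w : List A} {b : A}
    (hb : b ∈ restrict (viewOf dom w L \ view dom w q) w) : dom b ∩ subtree hT r q = ∅ := by
  obtain ⟨j, ⟨hjL, hjq⟩, hj⟩ := exists_getElem?_of_mem_restrict hb
  obtain ⟨q', hq', hjq'⟩ := Set.mem_iUnion₂.1 hjL
  rw [← participants_eq_of_getElem? (dom := dom) hj, ← Set.not_nonempty_iff_eq_empty]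
  exact fun hin => hjq (mem_sharedView_of_mem_view_of_inter_nonempty hconn hjq' (hL q' hq') hin).1

variable (hd : IDiamond M fun a b => dom a ∩ dom b = ∅)
include hd

theorem stateOn_viewOf_insert_eq {L : Set P} {q : P} (hpar : parent hT r q ∈ L)
    (hL : ∀ q' ∈ L, q' ∉ subtree hT r q) {w w' : List A} (hw : IsLocallyDefined dom M hT r w)
    (hw' : IsLocallyDefined dom M hT r w')
    (hq : localState dom M hT r w q = localState dom M hT r w' q)
    (hLeq : stateOn M w (viewOf dom w L) = stateOn M w' (viewOf dom w' L)) :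
    stateOn M w (viewOf dom w (insert q L)) = stateOn M w' (viewOf dom w' (insert q L)) := by
  obtain ⟨hshared, hview⟩ := stateOn_eq_of_localState_eq hw hw' hq
  have hindep : ∀ u : List A, ∀ a ∈ restrict (view dom u q \ viewOf dom u L) u,
      ∀ b ∈ restrict (viewOf dom w' L \ view dom w' q) w', dom a ∩ dom b = ∅ :=
    fun u a ha b hb => Set.eq_empty_iff_forall_notMem.2 fun p ⟨hpa, hpb⟩ =>
      (Set.eq_empty_iff_forall_notMem.1 (inter_subtree_eq_empty_of_mem_restrict hconn hL hb)) p
        ⟨hpb, subset_subtree_of_mem_restrict hconn hpar ha hpa⟩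
  rw [viewOf_insert, viewOf_insert, Set.union_comm, Set.union_comm (view dom w' q)]
  refine stateOn_union_eq hd (isCausallyClosed_viewOf w L) (isCausallyClosed_view w q)
    (isCausallyClosed_viewOf w' L) (isCausallyClosed_view w' q) ?_ hLeq hview (hindep w)
    (hindep w')
  rwa [viewOf_inter_view_eq_sharedView hconn hpar hL,
    viewOf_inter_view_eq_sharedView hconn hpar hL]

theorem stateOn_viewOf_eq_of_isRootedAt {ρ : P} {w w' : List A}
    (hw : IsLocallyDefined dom M hT r w) (hw' : IsLocallyDefined dom M hT r w') (s : Finset P)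
    (hs : IsRootedAt hT r ρ s)
    (hagree : ∀ q ∈ s, localState dom M hT r w q = localState dom M hT r w' q) :
    stateOn M w (viewOf dom w s) = stateOn M w' (viewOf dom w' s) := by
  induction s using Finset.induction_on_max_value (depth hT r) with
  | empty => simp [viewOf, stateOn_empty]
  | insert a s has hmax ih =>
    -- `a` is a deepest vertex: its parent is in `s` and no vertex of `s` lies below it.
    have hsub : ∀ x ∈ s, x ∈ subtree hT r ρ := fun x hx =>
      (hs x (Finset.mem_insert_of_mem hx)).1
    have hbelow : ∀ x ∈ s, x ∈ subtree hT r a → False := fun x hx hxa => by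
      have := depth_lt_of_mem_subtree hxa (ne_of_mem_of_not_mem hx has)
      have := hmax x hx
      omega
    by_cases haρ : a = ρ
    · subst haρ
      obtain rfl : s = ∅ := Finset.eq_empty_of_forall_notMem fun x hx => hbelow x hx (hsub x hx)
      simpa [viewOf] using (stateOn_eq_of_localState_eq hw hw' (hagree a (by simp))).2
    have har : a ≠ r := ne_root_of_mem_subtree (hs a (Finset.mem_insert_self a s)).1 haρ
    have hpar : parent hT r a ∈ s := by
      refine (Finset.mem_insert.1 ((hs a (Finset.mem_insert_self a s)).2 haρ)).resolve_left ?_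
      exact (adj_parent har).ne.symm
    have hs' : IsRootedAt hT r ρ s := by
      refine fun x hx => ⟨hsub x hx, fun hne => ?_⟩
      refine (Finset.mem_insert.1 ((hs x (Finset.mem_insert_of_mem hx)).2 hne)).resolve_left ?_
      intro hxa
      have := depth_parent (hT := hT) (ne_root_of_mem_subtree (hsub x hx) hne)
      have := hmax x hx
      rw [hxa] at *
      omega
    rw [Finset.coe_insert]
    exact stateOn_viewOf_insert_eq hconn hd hpar (fun q' hq' => hbelow q' hq') hw hw'
      (hagree a (Finset.mem_insert_self a s))
      (ih hs' fun q hq => hagree q (Finset.mem_insert_of_mem hq))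

theorem stateOn_viewOf_eq {D : Set P} (hD : (T.induce D).Connected) {w w' : List A}
    (hw : IsLocallyDefined dom M hT r w) (hw' : IsLocallyDefined dom M hT r w')
    (hagree : ∀ q ∈ D, localState dom M hT r w q = localState dom M hT r w' q) :
    stateOn M w (viewOf dom w D) = stateOn M w' (viewOf dom w' D) := by
  obtain ⟨ρ, hρ, hDρ⟩ := exists_subset_subtree (hT := hT) (r := r) hD
  obtain ⟨F, hFD, hF⟩ := exists_finset_viewOf_eq (dom := dom) w D
  obtain ⟨F', hF'D, hF'⟩ := exists_finset_viewOf_eq (dom := dom) w' D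
  obtain ⟨s, hs, hFs, hsD⟩ := exists_isRootedAt_superset hD hρ hDρ (F ∪ F')
    (by simpa using And.intro hFD hF'D)
  have hcover : ∀ {u : List A} {G : Finset P}, viewOf dom u G = viewOf dom u D → G ⊆ s →
      viewOf dom u s = viewOf dom u D := fun hG hGs =>
    Set.Subset.antisymm (Set.biUnion_subset_biUnion_left hsD)
      (hG ▸ Set.biUnion_subset_biUnion_left (Finset.coe_subset.2 hGs))
  rw [← hcover hF (Finset.union_subset_left hFs), ← hcover hF' (Finset.union_subset_right hFs)]
  exact stateOn_viewOf_eq_of_isRootedAt hconn hd hw hw' s hs fun q hq => hagree q (hsD hq)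

end Merge

section Automaton

variable {P A S : Type} (dom : A → Set P) (M : PDFA A S) {T : SimpleGraph P} (hT : T.IsTree)
  (r : P)

/-- On reading `a`, the participants replay any word that produced their current local states.
By `localState_append_singleton_eq` the result does not depend on that word: it is the
transition computed by `TDiam` in the paper. -/
noncomputable def automaton : AAut P A dom fun _ => S × S where
  init _ := (M.s0, M.s0)
  trans a f :=
    if h : ∃ w, IsLocallyDefined dom M hT r w ∧ (nextState dom M w a).isSome ∧
        ∀ q : {x // x ∈ dom a}, f q = localState dom M hT r w q
    then some fun q => localState dom M hT r (h.choose ++ [a]) q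
    else none
  Acc := {g | ∃ w, M.Accepts w ∧ g = localState dom M hT r w}

variable {dom M hT r} (hconn : ∀ a, (T.induce (dom a)).Connected)
  (hd : IDiamond M fun a b => dom a ∩ dom b = ∅)
include hconn hd

theorem nextState_eq {w w' : List A} (hw : IsLocallyDefined dom M hT r w)
    (hw' : IsLocallyDefined dom M hT r w') {a : A}
    (hagree : ∀ q ∈ dom a, localState dom M hT r w q = localState dom M hT r w' q) :
    nextState dom M w a = nextState dom M w' a := by
  rw [nextState, nextState, stateOn_viewOf_eq hconn hd (hconn a) hw hw' hagree]

theorem localState_append_singleton_eq {w w' : List A} (hw : IsLocallyDefined dom M hT r w)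
    (hw' : IsLocallyDefined dom M hT r w') {a : A}
    (hagree : ∀ q ∈ dom a, localState dom M hT r w q = localState dom M hT r w' q) {p : P}
    (hp : p ∈ dom a) :
    localState dom M hT r (w ++ [a]) p = localState dom M hT r (w' ++ [a]) p := by
  rw [localState_append_singleton_of_mem hconn hp, localState_append_singleton_of_mem hconn hp,
    nextState_eq hconn hd hw hw' hagree, hagree p hp]

theorem stepw_eq_of_localState_eq (hne : ∀ a, (dom a).Nonempty) {w w' : List A}
    (hw : IsLocallyDefined dom M hT r w) (hw' : IsLocallyDefined dom M hT r w')
    (h : localState dom M hT r w = localState dom M hT r w') :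
    M.stepw M.s0 w = M.stepw M.s0 w' := by
  have hT' : (T.induce Set.univ).Connected :=
    (induceUnivIso T).connected_iff.2 hT.connected
  have hall : ∀ u : List A, stateOn M u (viewOf dom u Set.univ) = M.stepw M.s0 u :=
    fun u => stateOn_eq_stepw fun i hi => by
      obtain ⟨q, hq⟩ := hne u[i]
      refine Set.mem_biUnion (Set.mem_univ q) (mem_view_of_mem_participants ?_)
      rwa [participants_eq_of_getElem? (List.getElem?_eq_getElem hi)]
  rw [← hall w, ← hall w', stateOn_viewOf_eq hconn hd hT' hw hw' fun q _ => congrFun h q]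

theorem automaton_trans_localState {w : List A} (hw : IsLocallyDefined dom M hT r w) (a : A) :
    (automaton dom M hT r).trans a (fun q => localState dom M hT r w q) =
      if (nextState dom M w a).isSome then
        some fun q : {x // x ∈ dom a} => localState dom M hT r (w ++ [a]) q
      else none := by
  simp only [automaton]
  by_cases h : ∃ w', IsLocallyDefined dom M hT r w' ∧ (nextState dom M w' a).isSome ∧
      ∀ q : {x // x ∈ dom a}, localState dom M hT r w q = localState dom M hT r w' q
  · obtain ⟨hw', hnext', hagree⟩ := h.choose_spec
    have hagree : ∀ q ∈ dom a, localState dom M hT r w q = localState dom M hT r h.choose q :=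
      fun q hq => hagree ⟨q, hq⟩
    rw [dif_pos h, if_pos (nextState_eq hconn hd hw hw' hagree ▸ hnext')]
    congr 1
    funext q
    exact (localState_append_singleton_eq hconn hd hw hw' hagree q.2).symm
  · rw [dif_neg h, if_neg fun hnext => h ⟨w, hw, hnext, fun _ => rfl⟩]

theorem automaton_stepG_localState {w : List A} (hw : IsLocallyDefined dom M hT r w) (a : A) :
    (automaton dom M hT r).stepG a (localState dom M hT r w) =
      if (nextState dom M w a).isSome then some (localState dom M hT r (w ++ [a])) else none := by
  rw [AAut.stepG, automaton_trans_localState hconn hd hw]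
  split_ifs
  · simp only [Option.map_some]
    congr 1
    funext p
    split_ifs with hp
    · rfl
    · exact (localState_append_singleton_of_notMem hconn hp).symm
  · rfl

theorem runw_automaton_eq_some {w : List A} {g : P → S × S}
    (h : (automaton dom M hT r).runw (automaton dom M hT r).init w = some g) :
    IsLocallyDefined dom M hT r w ∧ g = localState dom M hT r w := by
  induction w using List.reverseRecOn generalizing g with
  | nil =>
    obtain rfl := (Option.some_inj.1 h).symm
    exact ⟨isLocallyDefined_nil, funext fun p => (localState_nil p).symm⟩
  | append_singleton w a ih =>
    rw [AAut.runw_append_singleton] at h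
    obtain ⟨g', hg', hstep⟩ := Option.bind_eq_some_iff.1 h
    obtain ⟨hw, rfl⟩ := ih hg'
    rw [automaton_stepG_localState hconn hd hw] at hstep
    split_ifs at hstep with hnext
    exact ⟨hw.append_singleton hconn hnext, (Option.some_inj.1 hstep).symm⟩

theorem runw_automaton_eq_localState (hne : ∀ a, (dom a).Nonempty) {w : List A}
    (hdef : (M.stepw M.s0 w).isSome) :
    (automaton dom M hT r).runw (automaton dom M hT r).init w =
      some (localState dom M hT r w) := by
  induction w using List.reverseRecOn with
  | nil => exact congrArg some (funext fun p => (localState_nil p).symm)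
  | append_singleton w a ih =>
    have hw : (M.stepw M.s0 w).isSome := by
      rw [M.stepw_append] at hdef
      exact Option.isSome_of_isSome_bind hdef
    rw [AAut.runw_append_singleton, ih hw, Option.bind_some,
      automaton_stepG_localState hconn hd (isLocallyDefined_of_isSome hd hw),
      if_pos (isSome_nextState hd (hne a) hdef)]

theorem automaton_accepts_iff (hne : ∀ a, (dom a).Nonempty) (w : List A) :
    (automaton dom M hT r).Accepts w ↔ M.Accepts w := by
  constructor
  · rintro ⟨g, ⟨w', ⟨s, hsF, hs⟩, rfl⟩, hrun⟩
    obtain ⟨hw, hg⟩ := runw_automaton_eq_some hconn hd hrun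
    have hw' := isLocallyDefined_of_isSome (hT := hT) (r := r) hd (by rw [hs]; rfl)
    exact ⟨s, hsF, by rw [stepw_eq_of_localState_eq hconn hd hne hw hw' hg.symm, hs]⟩
  · intro hacc
    refine ⟨_, ⟨w, hacc, rfl⟩, runw_automaton_eq_localState hconn hd hne ?_⟩
    obtain ⟨s, -, hs⟩ := hacc
    rw [hs]
    rfl

end Automaton

end TreeAsync

theorem stmt11 {P A S : Type} [Fintype S]
    (dom : A → Set P) (hne : ∀ a, (dom a).Nonempty)
    (T : SimpleGraph P) (htree : TreeLike dom T)
    (M : PDFA A S) (hd : IDiamond M (fun a b => dom a ∩ dom b = ∅)) :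
    -- the asynchronous automaton B of the construction: every process has
    -- local states S × S, starts in (s₀,s₀), and B recognizes exactly L(A);
    -- in particular every process has (at most) n² states
    ∃ B : AAut P A dom (fun _ => S × S),
      B.init = (fun _ => (M.s0, M.s0)) ∧
      (∀ w : List A, B.Accepts w ↔ M.Accepts w) ∧
      ∀ _p : P, Fintype.card (S × S) = Fintype.card S ^ 2 := by
  obtain ⟨hT, hconn, -⟩ := htree
  obtain ⟨r⟩ := hT.connected.nonempty
  exact ⟨TreeAsync.automaton dom M hT r, rfl, TreeAsync.automaton_accepts_iff hconn hd hne,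
    fun _ => by rw [Fintype.card_prod, sq]⟩
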